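/- arXiv:math/0411024 — 3 statements merged into one kernel-verified Lean document; each statement's English description precedes it below -/
import Mathlib

section
/- Let V = ℝ ⊕ ℝ ⊕ ℂ, W = ℝ ⊕ ℂ, and T₀′ : V → W the map T₀′(t,r,z) = (Im z, c₀ t + i r) with c₀ ≠ 0 real. For s ≠ 0, the family T̂_s = s·T₀′ has ker T̂_s equal to the fixed real line spanned by v = (0,0,1). The pullback under T₀′ of the orientation γ ∧ v ∧ iv of W (in the basis identification) equals (1/c₀)·(iv ∧ τ ∧ γ); consequently the induced orientation on ker T̂_s is −sign(c₀) times the standard one: o′(V) = −(1/(s³ c₀))·o(V) for s > 0. -/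
open ExteriorAlgebra

/-- Basis vectors of `V = ℝ{τ} ⊕ ℝ{γ} ⊕ ℂ{v}`: `τ`, `γ`, `v`, `iv`. -/
noncomputable def τV : ℝ × ℝ × ℂ := (1, 0, 0)
noncomputable def γV : ℝ × ℝ × ℂ := (0, 1, 0)
noncomputable def vV : ℝ × ℝ × ℂ := (0, 0, 1)
noncomputable def ivV : ℝ × ℝ × ℂ := (0, 0, Complex.I)

/-- Basis vectors of `W = ℝ{γ} ⊕ ℂ{v}`: `γ`, `v`, `iv`. -/
noncomputable def γW : ℝ × ℂ := (1, 0)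
noncomputable def vW : ℝ × ℂ := (0, 1)
noncomputable def ivW : ℝ × ℂ := (0, Complex.I)

/-!
The kernel of `T₀′` and the identity `Λ³T₀′(iv ∧ τ ∧ γ) = c₀ (γ ∧ v ∧ iv)` are read off from the
values of `T₀′` on the basis. For the orientation, `σ(a, z) = (Re z / c₀, Im z, i a)` is a section
of `T₀′` with `σ ∘ T₀′ - id` taking values in `ℝ v`; since `v ∧ v = 0`, every `w` with
`Λ(s T₀′) w = γ ∧ v ∧ iv` satisfies `v ∧ w = v ∧ Λ(s⁻¹ σ)(γ ∧ v ∧ iv) = (s³ c₀)⁻¹ (v ∧ iv ∧ τ ∧ γ)`,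
and the even block `v ∧ iv` commutes past `τ ∧ γ`.
-/

namespace ExteriorAlgebra

variable {R M : Type*} [CommRing R] [AddCommGroup M] [Module R M]

theorem ι_mul_eq_involute_mul (x : M) (a : ExteriorAlgebra R M) :
    ι R x * a = CliffordAlgebra.involute a * ι R x := by
  induction a using ExteriorAlgebra.induction with
  | algebraMap r => rw [AlgHom.commutes, Algebra.commutes]
  | ι y => rw [CliffordAlgebra.involute_ι, neg_mul, eq_neg_iff_add_eq_zero, ι_add_mul_swap]
  | mul a b ha hb => rw [map_mul, ← mul_assoc, ha, mul_assoc, hb, ← mul_assoc]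
  | add a b ha hb => rw [map_add, mul_add, add_mul, ha, hb]

theorem commute_ι_mul_ι_ι (a b c : M) : Commute (ι R a * ι R b) (ι R c) := by
  rw [Commute, SemiconjBy, ι_mul_eq_involute_mul c, map_mul, CliffordAlgebra.involute_ι,
    CliffordAlgebra.involute_ι, neg_mul_neg]

theorem commute_ι_mul_ι (a b c d : M) : Commute (ι R a * ι R b) (ι R c * ι R d) :=
  (commute_ι_mul_ι_ι a b c).mul_right (commute_ι_mul_ι_ι a b d)

theorem ι_mul_map_eq_of_sub_mem_span {v : M} {e : M →ₗ[R] M} (he : ∀ x, e x - x ∈ R ∙ v)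
    (u : ExteriorAlgebra R M) : ι R v * map e u = ι R v * u := by
  induction u using ExteriorAlgebra.induction with
  | algebraMap r => rw [AlgHom.commutes]
  | ι x =>
    obtain ⟨r, hr⟩ := Submodule.mem_span_singleton.mp (he x)
    rw [map_apply_ι, ← sub_eq_zero, ← mul_sub, ← map_sub, ← hr, map_smul, mul_smul_comm,
      ι_sq_zero, smul_zero]
  | mul a b ha hb =>
    rw [map_mul, ← mul_assoc, ha, ι_mul_eq_involute_mul, mul_assoc, hb, ← mul_assoc,
      ← ι_mul_eq_involute_mul, mul_assoc]
  | add a b ha hb => rw [map_add, mul_add, mul_add, ha, hb]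

end ExteriorAlgebra

/-- The paper's `T₀′`. -/
noncomputable def modelMap (c₀ : ℝ) : ℝ × ℝ × ℂ →ₗ[ℝ] ℝ × ℂ where
  toFun x := (x.2.2.im, ((c₀ * x.1 : ℝ) : ℂ) + Complex.I * x.2.1)
  map_add' x y := by ext <;> simp; ring
  map_smul' a x := by ext <;> simp; ring

noncomputable def modelSection (c₀ : ℝ) : ℝ × ℂ →ₗ[ℝ] ℝ × ℝ × ℂ where
  toFun p := (p.2.re / c₀, p.2.im, Complex.I * p.1)
  map_add' p q := by ext <;> simp <;> ring
  map_smul' a p := by ext <;> simp <;> ring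

section

variable {c₀ : ℝ}

theorem modelMap_apply (x : ℝ × ℝ × ℂ) :
    modelMap c₀ x = (x.2.2.im, ((c₀ * x.1 : ℝ) : ℂ) + Complex.I * x.2.1) := rfl

theorem modelSection_apply (p : ℝ × ℂ) :
    modelSection c₀ p = (p.2.re / c₀, p.2.im, Complex.I * p.1) := rfl

theorem eq_modelMap {T : ℝ × ℝ × ℂ →ₗ[ℝ] ℝ × ℂ}
    (hT : ∀ (t r : ℝ) (z : ℂ),
      T (t, r, z) = ((Complex.I * (starRingEnd ℂ) z).re,
        ((c₀ * t : ℝ) : ℂ) + Complex.I * (r : ℂ))) :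
    T = modelMap c₀ :=
  LinearMap.ext fun ⟨t, r, z⟩ => by simp [hT, modelMap_apply]

theorem ker_modelMap (hc₀ : c₀ ≠ 0) : LinearMap.ker (modelMap c₀) = ℝ ∙ vV := by
  ext ⟨t, r, z⟩
  simp only [LinearMap.mem_ker, Submodule.mem_span_singleton, modelMap_apply, vV, Prod.ext_iff,
    Complex.ext_iff]
  constructor
  · rintro ⟨him, hre, hi⟩
    simp_all
  · rintro ⟨a, rfl, rfl, ha⟩
    simp [← ha]

theorem modelMap_ivV : modelMap c₀ ivV = γW := by
  simp [modelMap_apply, ivV, γW]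

theorem modelMap_τV : modelMap c₀ τV = c₀ • vW := by
  simp [modelMap_apply, τV, vW]

theorem modelMap_γV : modelMap c₀ γV = ivW := by
  simp [modelMap_apply, γV, ivW]

theorem modelSection_γW : modelSection c₀ γW = ivV := by
  simp [modelSection_apply, ivV, γW]

theorem modelSection_vW : modelSection c₀ vW = c₀⁻¹ • τV := by
  simp [modelSection_apply, τV, vW]

theorem modelSection_ivW : modelSection c₀ ivW = γV := by
  simp [modelSection_apply, γV, ivW]

theorem modelSection_modelMap_sub_mem (hc₀ : c₀ ≠ 0) (x : ℝ × ℝ × ℂ) :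
    modelSection c₀ (modelMap c₀ x) - x ∈ ℝ ∙ vV := by
  refine Submodule.mem_span_singleton.mpr ⟨-x.2.2.re, ?_⟩
  simp [modelSection_apply, modelMap_apply, vV, Prod.ext_iff, Complex.ext_iff, hc₀]

end

/-- Lemma 5.4 orientation computation: for the map
`T₀′(t,r,z) = (Im z, c₀t + ir)` with `c₀ ≠ 0`, the kernel of `T̂_s = s·T₀′`
(`s ≠ 0`) is the fixed real line spanned by `v`; the exterior-power identity
`Λ³T₀′(iv ∧ τ ∧ γ) = c₀·(γ ∧ v ∧ iv)` holds (equivalently the pullback of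
`γ ∧ v ∧ iv` is `(1/c₀)·(iv ∧ τ ∧ γ)`); and consequently, for `s > 0` and any `w`
with `Λ(s·T₀′) w = γ ∧ v ∧ iv`, the induced orientation satisfies
`−(v ∧ w) = −(1/(s³c₀))·(τ ∧ γ ∧ v ∧ iv)`, i.e. it is `−sign(c₀)` times the
standard one. -/
theorem bifurcation_orientation_sign (c₀ : ℝ) (hc₀ : c₀ ≠ 0)
    (T : (ℝ × ℝ × ℂ) →ₗ[ℝ] ℝ × ℂ)
    (hT : ∀ (t r : ℝ) (z : ℂ),
      T (t, r, z) = ((Complex.I * (starRingEnd ℂ) z).re,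
        ((c₀ * t : ℝ) : ℂ) + Complex.I * (r : ℂ))) :
    (∀ s : ℝ, s ≠ 0 →
      LinearMap.ker (s • T) = Submodule.span ℝ {vV}) ∧
    (ExteriorAlgebra.map T (ι ℝ ivV * ι ℝ τV * ι ℝ γV)
      = c₀ • (ι ℝ γW * ι ℝ vW * ι ℝ ivW)) ∧
    (∀ s : ℝ, 0 < s → ∀ w : ExteriorAlgebra ℝ (ℝ × ℝ × ℂ),
      ExteriorAlgebra.map (s • T) w = ι ℝ γW * ι ℝ vW * ι ℝ ivW →
      -(ι ℝ vV * w)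
        = (-(1 / (s ^ 3 * c₀))) • (ι ℝ τV * ι ℝ γV * ι ℝ vV * ι ℝ ivV)) := by
  obtain rfl := eq_modelMap hT
  refine ⟨fun s hs => (LinearMap.ker_smul _ s hs).trans (ker_modelMap hc₀), ?_, ?_⟩
  · rw [map_mul, map_mul, map_apply_ι, map_apply_ι, map_apply_ι, modelMap_ivV, modelMap_τV,
      modelMap_γV, map_smul, mul_smul_comm, smul_mul_assoc]
  · intro s hs w hw
    have hsec : ∀ x, ((s⁻¹ • modelSection c₀) ∘ₗ (s • modelMap c₀)) x - x ∈ ℝ ∙ vV := fun x => by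
      simpa [hs.ne'] using modelSection_modelMap_sub_mem hc₀ x
    have hvw : ι ℝ vV * w
        = (s ^ 3 * c₀)⁻¹ • (ι ℝ vV * ι ℝ ivV * (ι ℝ τV * ι ℝ γV)) := by
      rw [← ι_mul_map_eq_of_sub_mem_span hsec, ← map_comp_map, AlgHom.comp_apply, hw]
      simp only [map_mul, map_apply_ι, LinearMap.smul_apply, modelSection_γW, modelSection_vW,
        modelSection_ivW, map_smul, smul_mul_assoc, mul_smul_comm, smul_smul, mul_assoc]
      congr 1
      field_simp
    rw [hvw, (commute_ι_mul_ι vV ivV τV γV).eq, ← mul_assoc, ← neg_smul, one_div]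
end

section
/- Let H be a finite-dimensional complex vector space and T : H → H a ℂ-linear map that is symmetric with respect to the real inner product Re⟨·,·⟩. Suppose v ∈ ker T with ‖v‖ = 1. Then both v and iv are orthogonal (with respect to Re⟨·,·⟩) to the image of T. Consequently, if f(v) = T(v) is viewed as a section over the unit sphere of H with values in the real orthogonal complement of iv, then f cannot be transverse to zero at v unless ker T = 0. -/
/-! A unit vector `v ∈ ker T` is `Re`-orthogonal to `range T` by `Re`-symmetry, and since `T` is
`ℂ`-linear so is `i v` (test against `T (-i w)` instead of `T w`). As `Re⟨v, i v⟩ = 0`, the vector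
`v` itself is an admissible value of the section; reaching it would make `v` `Re`-orthogonal to
itself, i.e. `v = 0`. -/

open RCLike
open scoped InnerProductSpace

section ReSymmetric

variable {𝕜 E : Type*} [RCLike 𝕜] [NormedAddCommGroup E] [InnerProductSpace 𝕜 E]

theorem inner_I_smul_right_eq_inner_neg_I_smul_left (x v : E) :
    ⟪x, (I : 𝕜) • v⟫_𝕜 = ⟪(-I : 𝕜) • x, v⟫_𝕜 := by
  rw [inner_smul_left, inner_smul_right, map_neg, conj_I, neg_neg]

variable {T : E →ₗ[𝕜] E} (hsym : ∀ v w, re ⟪T v, w⟫_𝕜 = re ⟪v, T w⟫_𝕜) {v : E} (hv : T v = 0)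
include hsym hv

theorem re_inner_map_eq_zero_of_map_eq_zero (w : E) : re ⟪T w, v⟫_𝕜 = 0 := by
  rw [hsym, hv, inner_zero_right, map_zero]

theorem re_inner_map_I_smul_eq_zero_of_map_eq_zero (w : E) : re ⟪T w, (I : 𝕜) • v⟫_𝕜 = 0 := by
  rw [inner_I_smul_right_eq_inner_neg_I_smul_left, ← map_smul]
  exact re_inner_map_eq_zero_of_map_eq_zero hsym hv _

end ReSymmetric

theorem kernel_obstructs_transversality_general {H : Type*} [NormedAddCommGroup H]
    [InnerProductSpace ℂ H] (T : H →ₗ[ℂ] H)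
    (hsym : ∀ v w : H, (inner ℂ (T v) w : ℂ).re = (inner ℂ v (T w) : ℂ).re)
    (v : H) (hv : T v = 0) (hnorm : ‖v‖ = 1) :
    (∀ w : H, (inner ℂ (T w) v : ℂ).re = 0 ∧ (inner ℂ (T w) (Complex.I • v) : ℂ).re = 0) ∧
    ¬ (∀ y : H, (inner ℂ y (Complex.I • v) : ℂ).re = 0 → ∃ u : H, T u = y) := by
  have hperp : ∀ w : H, (inner ℂ (T w) v : ℂ).re = 0 ∧ (inner ℂ (T w) (Complex.I • v) : ℂ).re = 0 :=
    fun w ↦ ⟨re_inner_map_eq_zero_of_map_eq_zero hsym hv w,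
      re_inner_map_I_smul_eq_zero_of_map_eq_zero hsym hv w⟩
  refine ⟨hperp, fun hsurj ↦ ?_⟩
  have hv0 : v ≠ 0 := norm_ne_zero_iff.mp (hnorm ▸ one_ne_zero)
  obtain ⟨u, hu⟩ := hsurj v (real_inner_I_smul_self ℂ v)
  exact (re_inner_self_pos (𝕜 := ℂ).mpr hv0).ne' (hu ▸ (hperp u).1)

/-- key linear-algebra step in Proposition 2.13: if `T` is ℂ-linear
and symmetric for `Re⟨·,·⟩` and `v` is a unit vector in `ker T`, then both `v` and
`iv` are `Re`-orthogonal to the image of `T`; consequently the section `u ↦ Tu`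
over the unit sphere with values in `(iv)ᗮ` cannot be transverse to zero at `v`:
not every `y` with `Re⟨y, iv⟩ = 0` lies in the image of `T`. -/
theorem kernel_obstructs_transversality {H : Type*} [NormedAddCommGroup H]
    [InnerProductSpace ℂ H] [FiniteDimensional ℂ H] (T : H →ₗ[ℂ] H)
    (hsym : ∀ v w : H, (inner ℂ (T v) w : ℂ).re = (inner ℂ v (T w) : ℂ).re)
    (v : H) (hv : T v = 0) (hnorm : ‖v‖ = 1) :
    (∀ w : H, (inner ℂ (T w) v : ℂ).re = 0 ∧ (inner ℂ (T w) (Complex.I • v) : ℂ).re = 0) ∧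
    ¬ (∀ y : H, (inner ℂ y (Complex.I • v) : ℂ).re = 0 → ∃ u : H, T u = y) :=
  kernel_obstructs_transversality_general T hsym v hv hnorm
end

section
/- Let N : D(N) ⊆ H → H be a self-adjoint Fredholm operator with finite-dimensional kernel 𝐇 = ker N, and suppose H = Ran(N) ⊕ 𝐇 orthogonally. Let {N_s} be a C² family with N₀ = N. Then for small s, the finite-dimensional operator T(s) = (I−Π)∘N_s∘(id + f(·,s)) : 𝐇 → 𝐇 obtained from the implicit function theorem (with Π the projection onto Ran(N) and f(φ,0)=0, ∂f/∂s(φ,0)=0) satisfies T(s)* = T(s) with respect to the inner product on 𝐇, provided each N_s is symmetric. -/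
namespace LinearMap.IsSymmetric

variable {𝕜 E : Type*} [RCLike 𝕜] [NormedAddCommGroup E] [InnerProductSpace 𝕜 E]
  {K : Submodule 𝕜 E}

open scoped InnerProductSpace

theorem inner_apply_add_eq_inner_apply_add {A : E →ₗ[𝕜] E} (hA : A.IsSymmetric)
    {x y u v : E} (hu : u ∈ Kᗮ) (hv : v ∈ Kᗮ)
    (hAx : A (x + u) ∈ K) (hAy : A (y + v) ∈ K) :
    ⟪A (x + u), y⟫_𝕜 = ⟪x, A (y + v)⟫_𝕜 :=
  calc ⟪A (x + u), y⟫_𝕜 = ⟪A (x + u), y + v⟫_𝕜 := by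
        rw [inner_add_right, Submodule.inner_right_of_mem_orthogonal hAx hv, add_zero]
    _ = ⟪x + u, A (y + v)⟫_𝕜 := hA _ _
    _ = ⟪x, A (y + v)⟫_𝕜 := by
        rw [inner_add_left, Submodule.inner_left_of_mem_orthogonal hAy hu, add_zero]

end LinearMap.IsSymmetric

theorem local_model_symmetric_general {H : Type*} [NormedAddCommGroup H]
    [InnerProductSpace ℝ H] (K : Submodule ℝ H) (N : ℝ → (H →ₗ[ℝ] H))
    (hNsym : ∀ s v w, (inner ℝ (N s v) w : ℝ) = (inner ℝ v (N s w) : ℝ))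
    (f : K → ℝ → H)
    (hfmem : ∀ (φ : K) (s : ℝ), f φ s ∈ Kᗮ)
    (T : ℝ → (K →ₗ[ℝ] K))
    (hT : ∀ (s : ℝ) (φ : K), ((T s φ : K) : H) = N s ((φ : H) + f φ s)) :
    ∀ (s : ℝ) (φ ψ : K),
      (inner ℝ ((T s φ : K) : H) ((ψ : K) : H) : ℝ)
        = (inner ℝ ((φ : K) : H) ((T s ψ : K) : H) : ℝ) := by
  intro s φ ψ
  have hTmem : ∀ χ : K, N s ((χ : H) + f χ s) ∈ K := fun χ => hT s χ ▸ (T s χ).2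
  rw [hT, hT]
  exact LinearMap.IsSymmetric.inner_apply_add_eq_inner_apply_add (hNsym s)
    (hfmem φ s) (hfmem ψ s) (hTmem φ) (hTmem ψ)

/-- Lemma 4.10(a), finite-dimensional model: the local model
`T(s) : 𝐇 → 𝐇` of a family of symmetric operators `N_s`, obtained via the implicit
function theorem (`f(φ,s) ⊥ 𝐇`, `f(φ,0) = 0`, `T(s)φ = N_s(φ + f(φ,s)) ∈ 𝐇`), is
itself symmetric with respect to the inner product of `𝐇`. -/
theorem local_model_symmetric {H : Type*} [NormedAddCommGroup H]
    [InnerProductSpace ℝ H] (K : Submodule ℝ H) (N : ℝ → (H →ₗ[ℝ] H))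
    (hNsym : ∀ s v w, (inner ℝ (N s v) w : ℝ) = (inner ℝ v (N s w) : ℝ))
    (f : K → ℝ → H) (hf0 : ∀ φ : K, f φ 0 = 0)
    (hfmem : ∀ (φ : K) (s : ℝ), f φ s ∈ Kᗮ)
    (T : ℝ → (K →ₗ[ℝ] K))
    (hT : ∀ (s : ℝ) (φ : K), ((T s φ : K) : H) = N s ((φ : H) + f φ s)) :
    ∀ (s : ℝ) (φ ψ : K),
      (inner ℝ ((T s φ : K) : H) ((ψ : K) : H) : ℝ)
        = (inner ℝ ((φ : K) : H) ((T s ψ : K) : H) : ℝ) :=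
  local_model_symmetric_general K N hNsym f hfmem T hT
end
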